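/- arXiv:2308.05373 — 5 statements merged into one kernel-verified Lean document; each statement's English description precedes it below -/
import Mathlib

section
/- There exists a constant γ > 0 such that for every n ≥ 4 and p ∈ [0,1], if X ~ Binomial(n,p) then Var[X·1(X ≥ 4)] ≤ γ·E[X·1(X ≥ 4)]. -/
open Finset Real

/-!
Write `W = X·1(X ≥ 4)` and `μ = np`. If `μ ≥ 6`, then `X - 3 ≤ W ≤ X` gives `E W ≥ μ - 3` and
`E W² ≤ E X² ≤ μ² + μ`, so `Var W ≤ 7μ - 9 ≤ 14 E W`. If `μ < 6` and `p ≤ 1/2`, then `W² ≤ (X)₄`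
(falling factorial) gives `E W² ≤ (n)₄ p⁴ = 24 C(n,4) p⁴`, while
`E W ≥ 4 P(X = 4) = 4 C(n,4) p⁴ (1-p)^(n-4) ≥ 4 C(n,4) p⁴ e^(-12)` since `1 - p ≥ e^(-2p)`.
If `μ < 6` and `p > 1/2`, then `n < 12` and `W ≤ n` gives `E W² ≤ n E W`.
-/

noncomputable def binomialMass (n : ℕ) (p : ℝ) (k : ℕ) : ℝ :=
  n.choose k * p ^ k * (1 - p) ^ (n - k)

noncomputable def binomialExpectation (n : ℕ) (p : ℝ) (f : ℕ → ℝ) : ℝ :=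
  ∑ k ∈ range (n + 1), binomialMass n p k * f k

def truncBelow (t k : ℕ) : ℝ := if t ≤ k then k else 0

lemma binomialMass_succ_mul_descFactorial_succ (n j r : ℕ) (p : ℝ) :
    binomialMass (n + 1) p (j + 1) * ((j + 1).descFactorial (r + 1) : ℝ) =
      (n + 1) * p * (binomialMass n p j * (j.descFactorial r : ℝ)) := by
  have hchoose : ((n + 1 : ℕ) : ℝ) * n.choose j = (n + 1).choose (j + 1) * (j + 1 : ℕ) := by
    exact_mod_cast Nat.add_one_mul_choose_eq n j
  rw [binomialMass, binomialMass, Nat.succ_descFactorial_succ, Nat.add_sub_add_right]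
  push_cast at hchoose ⊢
  linear_combination (-(p ^ (j + 1)) * (1 - p) ^ (n - j) * (j.descFactorial r : ℝ)) * hchoose

lemma binomialExpectation_descFactorial (n r : ℕ) (p : ℝ) :
    binomialExpectation n p (fun k => (k.descFactorial r : ℝ)) = n.descFactorial r * p ^ r := by
  induction r generalizing n with
  | zero =>
    simp only [binomialExpectation, binomialMass, Nat.descFactorial_zero, Nat.cast_one, mul_one,
      pow_zero]
    calc _ = (p + (1 - p)) ^ n := by rw [add_pow]; exact sum_congr rfl fun k _ => by ring
      _ = 1 := by rw [add_sub_cancel, one_pow]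
  | succ r ih =>
    cases n with
    | zero => simp [binomialExpectation]
    | succ n =>
      rw [binomialExpectation, sum_range_succ']
      simp only [binomialMass_succ_mul_descFactorial_succ, ← mul_sum]
      rw [← binomialExpectation, ih, Nat.succ_descFactorial_succ]
      simp only [Nat.zero_descFactorial_succ, Nat.cast_zero, mul_zero, add_zero]
      push_cast
      ring

section BinomialExpectation

variable {n : ℕ} {p : ℝ}

lemma binomialMass_nonneg (hp0 : 0 ≤ p) (hp1 : p ≤ 1) (k : ℕ) : 0 ≤ binomialMass n p k := by
  unfold binomialMass
  have : 0 ≤ 1 - p := by linarith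
  positivity

variable (n p) in
lemma binomialExpectation_add (f g : ℕ → ℝ) :
    binomialExpectation n p (fun k => f k + g k) =
      binomialExpectation n p f + binomialExpectation n p g := by
  simp only [binomialExpectation, mul_add, sum_add_distrib]

variable (n p) in
lemma binomialExpectation_const (c : ℝ) : binomialExpectation n p (fun _ => c) = c := by
  have h := binomialExpectation_descFactorial n 0 p
  simp only [binomialExpectation, Nat.descFactorial_zero, Nat.cast_one, mul_one, pow_zero] at h ⊢
  rw [← sum_mul, h, one_mul]

variable (n p) in
lemma binomialExpectation_id : binomialExpectation n p (fun k => (k : ℝ)) = n * p := by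
  simpa using binomialExpectation_descFactorial n 1 p

variable (n p) in
lemma binomialExpectation_sq :
    binomialExpectation n p (fun k => (k : ℝ) ^ 2) = n.descFactorial 2 * p ^ 2 + n * p := by
  have hsq (k : ℕ) : (k : ℝ) ^ 2 = (k.descFactorial 2 : ℝ) + k := by
    rcases k with _ | k
    · simp
    · rw [Nat.succ_descFactorial_succ, Nat.descFactorial_one]; push_cast; ring
  simp only [hsq, binomialExpectation_add, binomialExpectation_descFactorial,
    binomialExpectation_id]

lemma binomialExpectation_mono (hp0 : 0 ≤ p) (hp1 : p ≤ 1) {f g : ℕ → ℝ}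
    (h : ∀ k ≤ n, f k ≤ g k) : binomialExpectation n p f ≤ binomialExpectation n p g :=
  sum_le_sum fun k hk => mul_le_mul_of_nonneg_left (h k (Nat.lt_succ_iff.mp (mem_range.mp hk)))
    (binomialMass_nonneg hp0 hp1 k)

lemma binomialMass_mul_le_binomialExpectation (hp0 : 0 ≤ p) (hp1 : p ≤ 1) {f : ℕ → ℝ}
    (hf : ∀ k ≤ n, 0 ≤ f k) {k : ℕ} (hk : k ≤ n) :
    binomialMass n p k * f k ≤ binomialExpectation n p f :=
  single_le_sum (f := fun k => binomialMass n p k * f k)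
    (fun j hj => mul_nonneg (binomialMass_nonneg hp0 hp1 j)
      (hf j (Nat.lt_succ_iff.mp (mem_range.mp hj))))
    (mem_range.mpr (Nat.lt_succ_of_le hk))

lemma binomialExpectation_nonneg (hp0 : 0 ≤ p) (hp1 : p ≤ 1) {f : ℕ → ℝ}
    (hf : ∀ k ≤ n, 0 ≤ f k) : 0 ≤ binomialExpectation n p f :=
  (mul_nonneg (binomialMass_nonneg hp0 hp1 0) (hf 0 n.zero_le)).trans
    (binomialMass_mul_le_binomialExpectation hp0 hp1 hf n.zero_le)

lemma binomialExpectation_sq_le_mul (hp0 : 0 ≤ p) (hp1 : p ≤ 1) {f : ℕ → ℝ}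
    (hf0 : ∀ k ≤ n, 0 ≤ f k) (hfn : ∀ k ≤ n, f k ≤ n) :
    binomialExpectation n p (fun k => f k ^ 2) ≤ n * binomialExpectation n p f := by
  calc binomialExpectation n p (fun k => f k ^ 2)
      ≤ binomialExpectation n p (fun k => n * f k) :=
        binomialExpectation_mono hp0 hp1 fun k hk => by
          rw [sq]; exact mul_le_mul_of_nonneg_right (hfn k hk) (hf0 k hk)
    _ = n * binomialExpectation n p f := by
        simp only [binomialExpectation, mul_sum]; exact sum_congr rfl fun k _ => by ring

end BinomialExpectation

lemma truncBelow_nonneg (t k : ℕ) : 0 ≤ truncBelow t k := by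
  unfold truncBelow; split_ifs <;> positivity

lemma truncBelow_le (t k : ℕ) : truncBelow t k ≤ k := by
  unfold truncBelow; split_ifs <;> simp

lemma le_truncBelow_add (t k : ℕ) : (k : ℝ) ≤ truncBelow t k + (t - 1 : ℕ) := by
  unfold truncBelow
  split_ifs with h
  · simp
  · rw [zero_add]; exact_mod_cast (by omega : k ≤ t - 1)

lemma sq_truncBelow_four_le_descFactorial (k : ℕ) : truncBelow 4 k ^ 2 ≤ k.descFactorial 4 := by
  unfold truncBelow
  split_ifs with h
  · obtain ⟨m, rfl⟩ := Nat.exists_eq_add_of_le' h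
    simp only [Nat.succ_descFactorial_succ, Nat.descFactorial_zero]
    push_cast
    nlinarith [sq_nonneg (m : ℝ), (m.cast_nonneg : (0 : ℝ) ≤ m)]
  · rw [zero_pow two_ne_zero]; positivity

lemma exp_neg_two_mul_le_one_sub {p : ℝ} (hp0 : 0 ≤ p) (hp : p ≤ 1 / 2) :
    exp (-(2 * p)) ≤ 1 - p := by
  have h1p : 0 < 1 - p := by linarith
  have hinv : (1 - p)⁻¹ ≤ 1 + 2 * p := by
    rw [inv_le_iff_one_le_mul₀ h1p]; nlinarith
  rw [← exp_log h1p, exp_le_exp]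
  linarith [one_sub_inv_le_log_of_pos h1p]

section Variance

variable {n : ℕ} {p : ℝ}

lemma truncBelow_four_variance_le_of_le_mean (hp0 : 0 ≤ p) (hp1 : p ≤ 1) (hμ : 6 ≤ n * p) :
    binomialExpectation n p (fun k => truncBelow 4 k ^ 2) -
        binomialExpectation n p (truncBelow 4) ^ 2 ≤
      14 * binomialExpectation n p (truncBelow 4) := by
  have hA : binomialExpectation n p (fun k => truncBelow 4 k ^ 2) ≤ (n * p) ^ 2 + n * p :=
    calc binomialExpectation n p (fun k => truncBelow 4 k ^ 2)
        ≤ binomialExpectation n p (fun k => (k : ℝ) ^ 2) :=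
          binomialExpectation_mono hp0 hp1 fun k _ =>
            pow_le_pow_left₀ (truncBelow_nonneg 4 k) (truncBelow_le 4 k) 2
      _ = n.descFactorial 2 * p ^ 2 + n * p := binomialExpectation_sq n p
      _ ≤ (n * p) ^ 2 + n * p := by
          have : (n.descFactorial 2 : ℝ) ≤ n ^ 2 := by exact_mod_cast Nat.descFactorial_le_pow n 2
          nlinarith [sq_nonneg p]
  have hB : n * p - 3 ≤ binomialExpectation n p (truncBelow 4) := by
    have h := binomialExpectation_mono (n := n) hp0 hp1 (fun k _ => le_truncBelow_add 4 k)
    rw [binomialExpectation_id, binomialExpectation_add, binomialExpectation_const] at h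
    norm_num at h
    linarith
  nlinarith

lemma truncBelow_four_sq_le_of_mean_le (hp0 : 0 ≤ p) (hp : p ≤ 1 / 2) (hμ : n * p ≤ 6)
    (hn : 4 ≤ n) :
    binomialExpectation n p (fun k => truncBelow 4 k ^ 2) ≤
      6 * exp 12 * binomialExpectation n p (truncBelow 4) := by
  have hp1 : p ≤ 1 := by linarith
  have hA : binomialExpectation n p (fun k => truncBelow 4 k ^ 2) ≤ 24 * (n.choose 4 * p ^ 4) :=
    calc binomialExpectation n p (fun k => truncBelow 4 k ^ 2)
        ≤ binomialExpectation n p (fun k => (k.descFactorial 4 : ℝ)) :=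
          binomialExpectation_mono hp0 hp1 fun k _ => sq_truncBelow_four_le_descFactorial k
      _ = 24 * (n.choose 4 * p ^ 4) := by
          rw [binomialExpectation_descFactorial, Nat.descFactorial_eq_factorial_mul_choose]
          norm_num [Nat.factorial]
          ring
  have hB : 4 * (n.choose 4 * p ^ 4) * (1 - p) ^ (n - 4) ≤
      binomialExpectation n p (truncBelow 4) := by
    have h := binomialMass_mul_le_binomialExpectation hp0 hp1
      (fun k _ => truncBelow_nonneg 4 k) hn
    simp only [binomialMass, truncBelow, le_refl, if_true, Nat.cast_ofNat] at h
    linarith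
  have hexp : exp (-12) ≤ (1 - p) ^ (n - 4) :=
    calc exp (-12) ≤ exp (n * -(2 * p)) := exp_le_exp.mpr (by linarith)
      _ = exp (-(2 * p)) ^ n := exp_nat_mul _ n
      _ ≤ (1 - p) ^ n := pow_le_pow_left₀ (exp_pos _).le (exp_neg_two_mul_le_one_sub hp0 hp) n
      _ ≤ (1 - p) ^ (n - 4) := pow_le_pow_of_le_one (by linarith) (by linarith) (n.sub_le 4)
  have hexp12 : exp 12 * exp (-12) = 1 := by rw [← exp_add]; norm_num
  calc binomialExpectation n p (fun k => truncBelow 4 k ^ 2)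
      ≤ 24 * (n.choose 4 * p ^ 4) := hA
    _ = 6 * exp 12 * (4 * (n.choose 4 * p ^ 4) * exp (-12)) := by
        linear_combination (-24 * (n.choose 4 * p ^ 4)) * hexp12
    _ ≤ 6 * exp 12 * binomialExpectation n p (truncBelow 4) := by
        gcongr
        exact le_trans (by gcongr) hB

end Variance

/-- There is a constant `γ > 0` such that for all `n ≥ 4` and `p ∈ [0,1]`,
`Var[X·1(X ≥ 4)] ≤ γ·E[X·1(X ≥ 4)]` for `X ~ Binomial(n,p)`. -/
theorem stmt_1 :
    ∃ γ : ℝ, 0 < γ ∧ ∀ (n : ℕ), 4 ≤ n → ∀ p : ℝ, 0 ≤ p → p ≤ 1 →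
      (∑ k ∈ Finset.range (n + 1),
          (n.choose k : ℝ) * p ^ k * (1 - p) ^ (n - k) * (if 4 ≤ k then (k : ℝ) else 0) ^ 2)
        - (∑ k ∈ Finset.range (n + 1),
            (n.choose k : ℝ) * p ^ k * (1 - p) ^ (n - k) * (if 4 ≤ k then (k : ℝ) else 0)) ^ 2
      ≤ γ * ∑ k ∈ Finset.range (n + 1),
          (n.choose k : ℝ) * p ^ k * (1 - p) ^ (n - k) * (if 4 ≤ k then (k : ℝ) else 0) := by
  refine ⟨6 * exp 12, by positivity, fun n hn p hp0 hp1 => ?_⟩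
  change binomialExpectation n p (fun k => truncBelow 4 k ^ 2) -
      binomialExpectation n p (truncBelow 4) ^ 2 ≤
    6 * exp 12 * binomialExpectation n p (truncBelow 4)
  have hB : 0 ≤ binomialExpectation n p (truncBelow 4) :=
    binomialExpectation_nonneg hp0 hp1 fun k _ => truncBelow_nonneg 4 k
  have hγ : 14 ≤ 6 * exp 12 := by linarith [add_one_le_exp 12]
  have hvar := sub_le_self (binomialExpectation n p (fun k => truncBelow 4 k ^ 2))
    (sq_nonneg (binomialExpectation n p (truncBelow 4)))
  rcases le_or_gt 6 (n * p) with hμ | hμ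
  · nlinarith [truncBelow_four_variance_le_of_le_mean hp0 hp1 hμ]
  rcases le_or_gt p (1 / 2) with hp | hp
  · linarith [truncBelow_four_sq_le_of_mean_le hp0 hp hμ.le hn]
  · have hn12 : (n : ℝ) ≤ 12 := by nlinarith
    have h := binomialExpectation_sq_le_mul (n := n) hp0 hp1 (fun k _ => truncBelow_nonneg 4 k)
      fun k hk => (truncBelow_le 4 k).trans (by exact_mod_cast hk)
    nlinarith
end

section
/- There exists a constant C > 0 such that for every n ≥ 9, p ∈ [0,1], and a, b ≥ 2, if X ~ Binomial(n,p) and λ = np, then E[X·√(min{X,a}·min{X,b})·1(X ≥ 4)] ≥ C·min{λ·√(min(λ,a)·min(λ,b)), λ^4}. -/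
/-!
For `λ = np ≤ 8` the single term `X = 4` already suffices: it has probability
`C(n,4) p⁴ (1-p)^(n-4) ≳ λ⁴ e^{-72}` and there the integrand is at least `8`.
For `λ > 8`, Chebyshev's inequality puts mass at least `1/2` on `{X ≥ λ/2}`, where
`X ≥ 4` and each `min{X, a}` is at least `min{λ, a}/2`, so the expectation is at least
`λ √(min(λ,a) min(λ,b)) / 8`.
-/

open Finset Real

noncomputable def binomialWeight (n : ℕ) (p : ℝ) (k : ℕ) : ℝ :=
  (n.choose k : ℝ) * p ^ k * (1 - p) ^ (n - k)

section BinomialWeight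

variable {n : ℕ} {p : ℝ}

lemma binomialWeight_nonneg (hp0 : 0 ≤ p) (hp1 : p ≤ 1) (k : ℕ) : 0 ≤ binomialWeight n p k := by
  have : 0 ≤ 1 - p := by linarith
  unfold binomialWeight
  positivity

lemma eval_bernsteinPolynomial (n k : ℕ) (p : ℝ) :
    (bernsteinPolynomial ℝ n k).eval p = binomialWeight n p k := by
  simp [bernsteinPolynomial, binomialWeight]

lemma sum_binomialWeight (n : ℕ) (p : ℝ) : ∑ k ∈ range (n + 1), binomialWeight n p k = 1 := by
  simpa [Polynomial.eval_finsetSum, eval_bernsteinPolynomial] using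
    congrArg (Polynomial.eval p) (bernsteinPolynomial.sum ℝ n)

lemma sum_sq_sub_mul_binomialWeight (n : ℕ) (p : ℝ) :
    ∑ k ∈ range (n + 1), (n * p - k) ^ 2 * binomialWeight n p k = n * p * (1 - p) := by
  simpa [Polynomial.eval_finsetSum, eval_bernsteinPolynomial] using
    congrArg (Polynomial.eval p) (bernsteinPolynomial.variance ℝ n)

lemma sum_binomialWeight_le_of_le_abs_sub (hp0 : 0 ≤ p) (hp1 : p ≤ 1) {t : ℝ} (ht : 0 < t) :
    ∑ k ∈ (range (n + 1)).filter (fun k : ℕ => t ≤ |n * p - k|), binomialWeight n p k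
      ≤ n * p * (1 - p) / t ^ 2 := by
  rw [le_div_iff₀ (by positivity), sum_mul, ← sum_sq_sub_mul_binomialWeight]
  calc ∑ k ∈ (range (n + 1)).filter (fun k : ℕ => t ≤ |n * p - k|), binomialWeight n p k * t ^ 2
      ≤ ∑ k ∈ (range (n + 1)).filter (fun k : ℕ => t ≤ |n * p - k|),
          (n * p - k) ^ 2 * binomialWeight n p k := by
        refine sum_le_sum fun k hk => ?_
        have htk : t ^ 2 ≤ (n * p - k) ^ 2 := by
          rw [← sq_abs (n * p - k)]
          exact pow_le_pow_left₀ ht.le (mem_filter.1 hk).2 2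
        nlinarith [binomialWeight_nonneg (n := n) hp0 hp1 k]
    _ ≤ ∑ k ∈ range (n + 1), (n * p - k) ^ 2 * binomialWeight n p k :=
        sum_le_sum_of_subset_of_nonneg (filter_subset _ _)
          fun k _ _ => mul_nonneg (sq_nonneg _) (binomialWeight_nonneg hp0 hp1 k)

lemma one_sub_le_sum_binomialWeight_half_le (hp0 : 0 ≤ p) (hp1 : p ≤ 1) (hL : 0 < n * p) :
    1 - 4 / (n * p) ≤
      ∑ k ∈ (range (n + 1)).filter (fun k : ℕ => n * p / 2 ≤ k), binomialWeight n p k := by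
  have hlow : ∑ k ∈ (range (n + 1)).filter (fun k : ℕ => ¬ n * p / 2 ≤ k), binomialWeight n p k
      ≤ 4 / (n * p) := by
    calc _ ≤ ∑ k ∈ (range (n + 1)).filter (fun k : ℕ => n * p / 2 ≤ |n * p - k|),
            binomialWeight n p k := by
          refine sum_le_sum_of_subset_of_nonneg ?_ fun k _ _ => binomialWeight_nonneg hp0 hp1 k
          intro k hk
          simp only [mem_filter, not_le] at hk ⊢
          exact ⟨hk.1, by rw [abs_of_pos (by linarith)]; linarith⟩
      _ ≤ n * p * (1 - p) / (n * p / 2) ^ 2 :=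
          sum_binomialWeight_le_of_le_abs_sub hp0 hp1 (by positivity)
      _ = 4 * (1 - p) / (n * p) := by field_simp; ring
      _ ≤ 4 / (n * p) := by gcongr; linarith
  have := sum_filter_add_sum_filter_not (range (n + 1)) (fun k : ℕ => n * p / 2 ≤ k)
    (binomialWeight n p)
  linarith [sum_binomialWeight n p]

end BinomialWeight

lemma exp_neg_nine_mul_le_one_sub {p : ℝ} (hp0 : 0 ≤ p) (hp : p ≤ 8 / 9) :
    exp (-(9 * p)) ≤ 1 - p := by
  have hpos : 0 < 1 + 9 * p := by linarith
  calc exp (-(9 * p)) = (exp (9 * p))⁻¹ := exp_neg _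
    _ ≤ (1 + 9 * p)⁻¹ := inv_anti₀ hpos (by linarith [add_one_le_exp (9 * p)])
    _ ≤ 1 - p := by rw [inv_le_iff_one_le_mul₀ hpos]; nlinarith

lemma pow_four_div_le_choose_four {n : ℕ} (hn : 9 ≤ n) : (n : ℝ) ^ 4 / 125 ≤ n.choose 4 := by
  have hn' : (9 : ℝ) ≤ n := by exact_mod_cast hn
  have hsub : ((n + 1 - 4 : ℕ) : ℝ) = n - 3 := by
    rw [Nat.cast_sub (by omega)]; push_cast; ring
  have h := Nat.pow_le_choose (α := ℝ) 4 n
  rw [hsub, show (Nat.factorial 4 : ℝ) = 24 by norm_num [Nat.factorial]] at h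
  have h3 : 2 / 3 * (n : ℝ) ≤ n - 3 := by linarith
  have h3' : (2 / 3 * (n : ℝ)) ^ 4 ≤ (n - 3) ^ 4 := pow_le_pow_left₀ (by positivity) h3 4
  nlinarith

lemma binomialWeight_four_ge {n : ℕ} {p : ℝ} (hn : 9 ≤ n) (hp0 : 0 ≤ p) (hL : n * p ≤ 8) :
    exp (-72) / 125 * (n * p) ^ 4 ≤ binomialWeight n p 4 := by
  have hn' : (9 : ℝ) ≤ n := by exact_mod_cast hn
  have hp : p ≤ 8 / 9 := by nlinarith
  have hexp : exp (-72) ≤ (1 - p) ^ (n - 4) := by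
    have hm : ((n - 4 : ℕ) : ℝ) ≤ n := by exact_mod_cast Nat.sub_le n 4
    calc exp (-72) ≤ exp ((n - 4 : ℕ) * (-(9 * p))) := exp_le_exp.2 (by nlinarith)
      _ = exp (-(9 * p)) ^ (n - 4) := exp_nat_mul _ _
      _ ≤ (1 - p) ^ (n - 4) := pow_le_pow_left₀ (exp_pos _).le (exp_neg_nine_mul_le_one_sub hp0 hp) _
  calc exp (-72) / 125 * (n * p) ^ 4 = ((n : ℝ) ^ 4 / 125 * p ^ 4) * exp (-72) := by ring
    _ ≤ ((n.choose 4 : ℝ) * p ^ 4) * (1 - p) ^ (n - 4) := by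
        gcongr
        exact pow_four_div_le_choose_four hn
    _ = binomialWeight n p 4 := rfl

section Integrand

variable {a b : ℝ}

noncomputable def cappedMoment (a b : ℝ) (k : ℕ) : ℝ :=
  if 4 ≤ k then (k : ℝ) * sqrt (min (k : ℝ) a * min (k : ℝ) b) else 0

lemma cappedMoment_nonneg (k : ℕ) : 0 ≤ cappedMoment a b k := by
  unfold cappedMoment
  split_ifs <;> positivity

lemma eight_le_cappedMoment_four (ha : 2 ≤ a) (hb : 2 ≤ b) : 8 ≤ cappedMoment a b 4 := by
  have h2a : (2 : ℝ) ≤ min 4 a := le_min (by norm_num) ha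
  have h2b : (2 : ℝ) ≤ min 4 b := le_min (by norm_num) hb
  have hs : 2 ≤ sqrt (min 4 a * min 4 b) :=
    le_sqrt_of_sq_le (by nlinarith)
  simp only [cappedMoment, le_refl, if_true, Nat.cast_ofNat]
  linarith

lemma cappedMoment_ge_of_half_le (ha : 0 ≤ a) (hb : 0 ≤ b) {x : ℝ} (hx : 8 ≤ x) {k : ℕ}
    (hk : x / 2 ≤ k) : x / 4 * sqrt (min x a * min x b) ≤ cappedMoment a b k := by
  have hk4 : 4 ≤ k := by exact_mod_cast (by linarith : (4 : ℝ) ≤ k)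
  have hma : min x a / 2 ≤ min (k : ℝ) a := le_min (by linarith [min_le_left x a])
    (by linarith [min_le_right x a])
  have hmb : min x b / 2 ≤ min (k : ℝ) b := le_min (by linarith [min_le_left x b])
    (by linarith [min_le_right x b])
  have hprod : min x a * min x b / 4 ≤ min (k : ℝ) a * min (k : ℝ) b := by
    have : 0 ≤ min x a := le_min (by linarith) ha
    have : 0 ≤ min x b := le_min (by linarith) hb
    nlinarith
  have hsqrt : sqrt (min x a * min x b) / 2 ≤ sqrt (min (k : ℝ) a * min (k : ℝ) b) := by
    calc sqrt (min x a * min x b) / 2 = sqrt (min x a * min x b / 4) := by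
          rw [sqrt_div' _ (by norm_num : (0 : ℝ) ≤ 4),
            show (4 : ℝ) = 2 ^ 2 by norm_num, sqrt_sq (by norm_num)]
      _ ≤ _ := sqrt_le_sqrt hprod
  rw [cappedMoment, if_pos hk4]
  calc x / 4 * sqrt (min x a * min x b) = x / 2 * (sqrt (min x a * min x b) / 2) := by ring
    _ ≤ _ := mul_le_mul hk hsqrt (by positivity) (Nat.cast_nonneg k)

end Integrand

section Expectation

variable {n : ℕ} {p a b : ℝ}

lemma sum_binomialWeight_mul_cappedMoment_ge_of_le_eight (hn : 9 ≤ n) (hp0 : 0 ≤ p)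
    (hp1 : p ≤ 1) (ha : 2 ≤ a) (hb : 2 ≤ b) (hL : n * p ≤ 8) :
    exp (-72) / 16 * (n * p) ^ 4 ≤
      ∑ k ∈ range (n + 1), binomialWeight n p k * cappedMoment a b k := by
  have h4 : binomialWeight n p 4 * cappedMoment a b 4 ≤
      ∑ k ∈ range (n + 1), binomialWeight n p k * cappedMoment a b k :=
    single_le_sum (fun k _ => mul_nonneg (binomialWeight_nonneg hp0 hp1 k) (cappedMoment_nonneg k))
      (mem_range.2 (by omega))
  have hw := binomialWeight_four_ge hn hp0 hL
  have hf := eight_le_cappedMoment_four ha hb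
  have : 0 ≤ exp (-72) / 125 * (n * p) ^ 4 := by positivity
  nlinarith

lemma sum_binomialWeight_mul_cappedMoment_ge_of_eight_le (hp0 : 0 ≤ p) (hp1 : p ≤ 1)
    (ha : 0 ≤ a) (hb : 0 ≤ b) (hL : 8 ≤ n * p) :
    n * p * sqrt (min (n * p) a * min (n * p) b) / 8 ≤
      ∑ k ∈ range (n + 1), binomialWeight n p k * cappedMoment a b k := by
  set S := (range (n + 1)).filter (fun k : ℕ => n * p / 2 ≤ k)
  set c := n * p / 4 * sqrt (min (n * p) a * min (n * p) b)
  have hmass : 1 / 2 ≤ ∑ k ∈ S, binomialWeight n p k := by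
    have := one_sub_le_sum_binomialWeight_half_le hp0 hp1 (by linarith)
    have : 4 / (n * p) ≤ 1 / 2 := by rw [div_le_div_iff₀ (by linarith) (by norm_num)]; linarith
    linarith
  calc n * p * sqrt (min (n * p) a * min (n * p) b) / 8 = c * (1 / 2) := by ring
    _ ≤ c * ∑ k ∈ S, binomialWeight n p k := by gcongr
    _ = ∑ k ∈ S, binomialWeight n p k * c := by rw [mul_sum]; simp only [mul_comm]
    _ ≤ ∑ k ∈ S, binomialWeight n p k * cappedMoment a b k :=
        sum_le_sum fun k hk => mul_le_mul_of_nonneg_left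
          (cappedMoment_ge_of_half_le ha hb hL (mem_filter.1 hk).2)
          (binomialWeight_nonneg hp0 hp1 k)
    _ ≤ _ := sum_le_sum_of_subset_of_nonneg (filter_subset _ _) fun k _ _ =>
        mul_nonneg (binomialWeight_nonneg hp0 hp1 k) (cappedMoment_nonneg k)
end Expectation

/-- There is `C > 0` such that for `X ~ Binomial(n,p)` with `n ≥ 9`, `p ∈ [0,1]`,
`a, b ≥ 2` and `λ = np`,
`E[X·√(min{X,a}·min{X,b})·1(X ≥ 4)] ≥ C·min{λ·√(min(λ,a)·min(λ,b)), λ^4}`. -/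
theorem stmt_2 :
    ∃ C : ℝ, 0 < C ∧ ∀ (n : ℕ), 9 ≤ n → ∀ p : ℝ, 0 ≤ p → p ≤ 1 →
      ∀ a b : ℝ, 2 ≤ a → 2 ≤ b →
      ∑ k ∈ Finset.range (n + 1),
          (n.choose k : ℝ) * p ^ k * (1 - p) ^ (n - k) *
            (if 4 ≤ k then (k : ℝ) * Real.sqrt (min (k : ℝ) a * min (k : ℝ) b) else 0)
        ≥ C * min (((n : ℝ) * p) * Real.sqrt (min ((n : ℝ) * p) a * min ((n : ℝ) * p) b))
              (((n : ℝ) * p) ^ 4) := by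
  refine ⟨exp (-72) / 16, by positivity, fun n hn p hp0 hp1 a b ha hb => ?_⟩
  change exp (-72) / 16 * min _ _ ≤
    ∑ k ∈ range (n + 1), binomialWeight n p k * cappedMoment a b k
  have hC : exp (-72) / 16 ≤ 1 / 8 := by
    have := exp_le_one_iff.2 (by norm_num : (-72 : ℝ) ≤ 0)
    linarith
  rcases le_total ((n : ℝ) * p) 8 with hL | hL
  · calc _ ≤ exp (-72) / 16 * ((n : ℝ) * p) ^ 4 := by gcongr; exact min_le_right _ _
      _ ≤ _ := sum_binomialWeight_mul_cappedMoment_ge_of_le_eight hn hp0 hp1 ha hb hL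
  · calc _ ≤ 1 / 8 * ((n : ℝ) * p * sqrt (min ((n : ℝ) * p) a * min ((n : ℝ) * p) b)) := by
          gcongr
          exact min_le_left _ _
      _ ≤ _ := by
          rw [one_div_mul_eq_div]
          exact sum_binomialWeight_mul_cappedMoment_ge_of_eight_le hp0 hp1 (by linarith)
            (by linarith) hL
end

section
/- For all n ≥ 4 and p ∈ (0, 1/n], the function r_n(p) = E[X·1(X ≥ 4)]/(n^4 p^4), where X ~ Binomial(n,p), is non-increasing in p on (0, 1/n]. -/
/-!
The identity `k·C(n,k)·(k-1)(k-2)(k-3) = n(n-1)(n-2)(n-3)·C(n-4,k-4)` turns `E[X·1(X ≥ 4)] / p⁴`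
into `n(n-1)(n-2)(n-3)` times the Bernstein polynomial of degree `n - 4` with coefficients
`1/((j+1)(j+2)(j+3))`. Bernstein polynomials with nonincreasing coefficients are nonincreasing on
`[0,1]`, because the derivative of `∑ cⱼ bₙ,ⱼ` is `n ∑ (cⱼ₊₁ - cⱼ) bₙ₋₁,ⱼ`.
-/

open Finset Polynomial

namespace bernsteinPolynomial

variable {R : Type*} [CommRing R]

theorem derivative_sum_smul (m : ℕ) (c : ℕ → R) :
    derivative (∑ ν ∈ range (m + 2), c ν • bernsteinPolynomial R (m + 1) ν) =
      (m + 1 : R[X]) * ∑ ν ∈ range (m + 1), (c (ν + 1) - c ν) • bernsteinPolynomial R m ν := by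
  have htel : ∑ ν ∈ range (m + 1), c (ν + 1) • bernsteinPolynomial R m (ν + 1)
      + c 0 • bernsteinPolynomial R m 0 = ∑ ν ∈ range (m + 1), c ν • bernsteinPolynomial R m ν := by
    rw [← sum_range_succ' (fun ν => c ν • bernsteinPolynomial R m ν), sum_range_succ,
      eq_zero_of_lt R (lt_add_one m), smul_zero, add_zero]
  rw [derivative_sum, sum_range_succ']
  simp only [derivative_smul, derivative_succ_aux, derivative_zero, Nat.add_sub_cancel,
    Nat.cast_succ, ← mul_smul_comm, ← mul_sum, smul_sub, sub_smul, sum_sub_distrib]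
  linear_combination -(↑m + 1 : R[X]) * htel

theorem eval_nonneg [LinearOrder R] [IsStrictOrderedRing R] (n ν : ℕ) {x : R} (h0 : 0 ≤ x)
    (h1 : x ≤ 1) :
    0 ≤ (bernsteinPolynomial R n ν).eval x := by
  have : 0 ≤ 1 - x := sub_nonneg.2 h1
  simp only [bernsteinPolynomial, eval_mul, eval_natCast, eval_pow, eval_X, eval_sub, eval_one]
  positivity

theorem antitoneOn_eval_sum_smul (n : ℕ) (c : ℕ → ℝ) (hc : ∀ ν < n, c (ν + 1) ≤ c ν) :
    AntitoneOn (fun x => (∑ ν ∈ range (n + 1), c ν • bernsteinPolynomial ℝ n ν).eval x)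
      (Set.Icc 0 1) := by
  cases n with
  | zero => simpa [bernsteinPolynomial] using antitoneOn_const
  | succ m =>
    refine antitoneOn_of_deriv_nonpos (convex_Icc 0 1) (Polynomial.continuousOn _)
      (Polynomial.differentiableOn _) fun x hx => ?_
    rw [interior_Icc] at hx
    rw [Polynomial.deriv, derivative_sum_smul, eval_mul, eval_finsetSum]
    refine mul_nonpos_of_nonneg_of_nonpos
      (by simp only [eval_add, eval_natCast, eval_one]; positivity) (sum_nonpos fun ν hν => ?_)
    rw [eval_smul, smul_eq_mul]
    exact mul_nonpos_of_nonpos_of_nonneg (sub_nonpos.2 (hc ν (mem_range.1 hν)))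
      (eval_nonneg _ _ hx.1.le hx.2.le)

end bernsteinPolynomial

theorem Nat.add_choose_add_mul_descFactorial (N j m : ℕ) :
    (N + m).choose (j + m) * (j + m).descFactorial m = (N + m).descFactorial m * N.choose j := by
  induction m with
  | zero => simp
  | succ m ih =>
    rw [← add_assoc, ← add_assoc, Nat.succ_descFactorial_succ, Nat.succ_descFactorial_succ,
      ← mul_assoc, ← Nat.add_one_mul_choose_eq, mul_assoc, ih, mul_assoc]

/-- `E[X·1(X ≥ m)]` for `X ∼ Binomial(n, p)`. -/
noncomputable def binomialTruncatedMean (n m : ℕ) (p : ℝ) : ℝ :=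
  ∑ k ∈ range (n + 1), (n.choose k : ℝ) * p ^ k * (1 - p) ^ (n - k) * (if m ≤ k then (k : ℝ) else 0)

theorem binomialTruncatedMean_eq_eval_sum_smul_bernsteinPolynomial (n m : ℕ) (hmn : m + 1 ≤ n)
    (x : ℝ) :
    binomialTruncatedMean n (m + 1) x = x ^ (m + 1) * n.descFactorial (m + 1) *
        (∑ j ∈ range (n - (m + 1) + 1),
          ((j + m).descFactorial m : ℝ)⁻¹ • bernsteinPolynomial ℝ (n - (m + 1)) j).eval x := by
  obtain ⟨N, rfl⟩ := Nat.exists_eq_add_of_le' hmn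
  rw [binomialTruncatedMean, Nat.add_sub_cancel, show N + (m + 1) + 1 = (m + 1) + (N + 1) by ring,
    sum_range_add, sum_eq_zero fun k hk => by rw [if_neg (not_le.2 (mem_range.1 hk)), mul_zero],
    zero_add, eval_finsetSum, mul_sum]
  refine sum_congr rfl fun j _ => ?_
  have hchoose : ((N + (m + 1)).choose (m + 1 + j) * (m + 1 + j) * (j + m).descFactorial m : ℝ)
      = (N + (m + 1)).descFactorial (m + 1) * N.choose j := by
    norm_cast
    rw [add_comm (m + 1) j, ← Nat.add_choose_add_mul_descFactorial, ← add_assoc j m 1,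
      Nat.succ_descFactorial_succ]
    ring
  have hD : ((j + m).descFactorial m : ℝ) ≠ 0 := by
    exact_mod_cast (Nat.descFactorial_pos.2 (Nat.le_add_left m j)).ne'
  simp only [eval_smul, bernsteinPolynomial, eval_mul, eval_natCast, eval_pow, eval_X, eval_sub,
    eval_one, smul_eq_mul, if_pos (Nat.le_add_right (m + 1) j)]
  rw [show N + (m + 1) - (m + 1 + j) = N - j by omega, pow_add]
  field_simp
  push_cast
  linear_combination (x ^ (m + 1) * x ^ j * (1 - x) ^ (N - j)) * hchoose

theorem antitoneOn_binomialTruncatedMean_div_pow (n m : ℕ) (hmn : m + 1 ≤ n) :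
    AntitoneOn (fun p => binomialTruncatedMean n (m + 1) p / p ^ (m + 1)) (Set.Ioc 0 1) := by
  intro p hp q hq hpq
  have hcoeff : ∀ j < n - (m + 1),
      ((j + 1 + m).descFactorial m : ℝ)⁻¹ ≤ ((j + m).descFactorial m : ℝ)⁻¹ := fun j _ =>
    inv_anti₀ (by exact_mod_cast Nat.descFactorial_pos.2 (Nat.le_add_left m j))
      (by gcongr; omega)
  simp only [binomialTruncatedMean_eq_eval_sum_smul_bernsteinPolynomial n m hmn, mul_assoc,
    mul_div_cancel_left₀ _ (pow_ne_zero _ hp.1.ne'),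
    mul_div_cancel_left₀ _ (pow_ne_zero _ hq.1.ne')]
  exact mul_le_mul_of_nonneg_left (bernsteinPolynomial.antitoneOn_eval_sum_smul _ _ hcoeff
    (Set.Ioc_subset_Icc_self hp) (Set.Ioc_subset_Icc_self hq) hpq) (Nat.cast_nonneg _)

/-- For `n ≥ 4`, the map `p ↦ E[X·1(X ≥ 4)]/(n^4 p^4)` (with `X ~ Binomial(n,p)`)
is non-increasing on `(0, 1/n]`. -/
theorem stmt_4 (n : ℕ) (hn : 4 ≤ n) (p q : ℝ) (hp : 0 < p) (hpq : p ≤ q)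
    (hq : q ≤ 1 / (n : ℝ)) :
    (∑ k ∈ Finset.range (n + 1),
        (n.choose k : ℝ) * q ^ k * (1 - q) ^ (n - k) * (if 4 ≤ k then (k : ℝ) else 0))
      / ((n : ℝ) ^ 4 * q ^ 4)
    ≤ (∑ k ∈ Finset.range (n + 1),
        (n.choose k : ℝ) * p ^ k * (1 - p) ^ (n - k) * (if 4 ≤ k then (k : ℝ) else 0))
      / ((n : ℝ) ^ 4 * p ^ 4) := by
  have hq1 : q ≤ 1 :=
    hq.trans (div_le_one_of_le₀ (by exact_mod_cast (by omega : 1 ≤ n)) n.cast_nonneg)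
  have hmono := antitoneOn_binomialTruncatedMean_div_pow n 3 hn
    ⟨hp, hpq.trans hq1⟩ ⟨hp.trans_le hpq, hq1⟩ hpq
  rw [mul_comm, ← div_div, mul_comm _ (p ^ 4), ← div_div]
  exact div_le_div_of_nonneg_right hmono (by positivity)
end

section
/- For every integer n ≥ 4, r_n(1/n) := (1 - 1/n)^n · (n(5n-6))/(2(n-1)^2) ≥ e^{-1}·(5/2 - 1/(2(n-1))) ≥ (7/3)·e^{-1}. -/
open Real

/-!
Splitting off one factor `1 - 1/n = (n-1)/n` collapses the left-hand side to
`(1 - 1/n)^(n-1) · (5/2 - 1/(2(n-1)))`, and `(1 - 1/n)^(n-1) = (1 + 1/(n-1))^{-(n-1)} ≥ e⁻¹`.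
-/

lemma inv_exp_one_le_one_sub_inv_pow (k : ℕ) : (exp 1)⁻¹ ≤ (1 - 1 / ((k : ℝ) + 1)) ^ k := by
  rcases k.eq_zero_or_pos with rfl | hk
  · simpa using inv_le_one_of_one_le₀ (one_le_exp zero_le_one)
  have hk : (0 : ℝ) < k := by exact_mod_cast hk
  have hbase : 1 - 1 / ((k : ℝ) + 1) = (1 + (k : ℝ)⁻¹)⁻¹ := by
    field_simp
    ring
  rw [hbase, inv_pow]
  exact inv_anti₀ (by positivity) one_add_inv_pow_le_exp

lemma one_sub_inv_pow_succ_mul_div_eq (k : ℕ) (c : ℝ) (hk : (k : ℝ) ≠ 0) :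
    (1 - 1 / ((k : ℝ) + 1)) ^ (k + 1) * (((k : ℝ) + 1) * c) / (2 * ((k : ℝ) + 1 - 1) ^ 2)
      = (1 - 1 / ((k : ℝ) + 1)) ^ k * (c / (2 * k)) := by
  have hk1 : (k : ℝ) + 1 ≠ 0 := by positivity
  rw [pow_succ, add_sub_cancel_right]
  field_simp
  ring

/-- For every integer `n ≥ 4`,
`(1 - 1/n)^n · n(5n-6)/(2(n-1)^2) ≥ e⁻¹·(5/2 - 1/(2(n-1))) ≥ (7/3)·e⁻¹`. -/
theorem stmt_6 (n : ℕ) (hn : 4 ≤ n) :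
    (1 - 1 / (n : ℝ)) ^ n * ((n : ℝ) * (5 * (n : ℝ) - 6)) / (2 * ((n : ℝ) - 1) ^ 2)
      ≥ (Real.exp 1)⁻¹ * (5 / 2 - 1 / (2 * ((n : ℝ) - 1))) ∧
    (Real.exp 1)⁻¹ * (5 / 2 - 1 / (2 * ((n : ℝ) - 1))) ≥ (7 / 3) * (Real.exp 1)⁻¹ := by
  obtain ⟨k, rfl⟩ : ∃ k, n = k + 1 := ⟨n - 1, by omega⟩
  have hk : (3 : ℝ) ≤ k := by exact_mod_cast (by omega : 3 ≤ k)
  have hk0 : (k : ℝ) ≠ 0 := (by linarith : (0 : ℝ) < k).ne'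
  push_cast
  have hfactor : 5 / 2 - 1 / (2 * ((k : ℝ) + 1 - 1)) = (5 * ((k : ℝ) + 1) - 6) / (2 * k) := by
    rw [add_sub_cancel_right]
    field_simp
    ring
  have hsix : 1 / (2 * (k : ℝ)) ≤ 1 / 6 := one_div_le_one_div_of_le (by norm_num) (by linarith)
  have hseven : 7 / 3 ≤ 5 / 2 - 1 / (2 * ((k : ℝ) + 1 - 1)) := by
    rw [add_sub_cancel_right]
    linarith
  constructor
  · rw [one_sub_inv_pow_succ_mul_div_eq k _ hk0, hfactor]
    exact mul_le_mul_of_nonneg_right (inv_exp_one_le_one_sub_inv_pow k) (by rw [← hfactor]; linarith)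
  · rw [mul_comm (7 / 3 : ℝ)]
    exact mul_le_mul_of_nonneg_left hseven (by positivity)
end

section
/- Let a ≤ b with a, b ≥ 2 and let y ≥ 4 be an integer. Define h(y,a,b) = ((y+1)√(min{y+1,a}·min{y+1,b}) - y√(min{y,a}·min{y,b}))^2. Then h(y,a,b) ≤ (81/16)·min{y,a}·min{y,b} ≤ (81/16)·y·√(min{y,a}·min{y,b}). -/
open Real

/-!
Write `g(t) = √(min t a · min t b)`. Raising `t` to `t + 1` can only increase `g`, and each factor
`min t a` grows by at most the ratio `(t + 1) / t`, so `t · g(t + 1) ≤ (t + 1) · g(t)`. Hence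
`0 ≤ (y + 1) g(y + 1) - y g(y) ≤ ((y + 1)² / y - y) g(y) = (2 + 1/y) g(y) ≤ (9/4) g(y)` for `y ≥ 4`,
and squaring gives the constant `81/16`. The second inequality is `g(y)² ≤ y · g(y)`, as
`g(y) ≤ y`.
-/

lemma min_mul_le_min_mul {t u a : ℝ} (ht : 0 ≤ t) (htu : t ≤ u) (ha : 0 ≤ a) :
    min u a * t ≤ min t a * u := by
  rcases le_total a t with hat | hta
  · rw [min_eq_right hat, min_eq_right (hat.trans htu)]
    exact mul_le_mul_of_nonneg_left htu ha
  · rw [min_eq_left hta, mul_comm]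
    exact mul_le_mul_of_nonneg_left (min_le_left u a) ht

section GeometricMeanOfMins

variable {t u a b : ℝ}

lemma sqrt_min_mul_min_le (ht : 0 ≤ t) (hb : 0 ≤ b) : √(min t a * min t b) ≤ t :=
  (sqrt_le_sqrt (mul_le_mul (min_le_left t a) (min_le_left t b) (le_min ht hb) ht)).trans_eq
    (sqrt_mul_self ht)

lemma sqrt_min_mul_min_mono (ht : 0 ≤ t) (htu : t ≤ u) (ha : 0 ≤ a) (hb : 0 ≤ b) :
    √(min t a * min t b) ≤ √(min u a * min u b) :=
  sqrt_le_sqrt <| mul_le_mul (min_le_min_right a htu) (min_le_min_right b htu) (le_min ht hb)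
    (le_min (ht.trans htu) ha)

lemma mul_sqrt_min_mul_min_le (ht : 0 ≤ t) (htu : t ≤ u) (ha : 0 ≤ a) (hb : 0 ≤ b) :
    t * √(min u a * min u b) ≤ u * √(min t a * min t b) := by
  have hu : 0 ≤ u := ht.trans htu
  have hmul_sqrt : ∀ r : ℝ, 0 ≤ r → ∀ x, r * √x = √(r ^ 2 * x) := fun r hr x => by
    rw [sqrt_mul (sq_nonneg r), sqrt_sq hr]
  rw [hmul_sqrt t ht, hmul_sqrt u hu]
  refine sqrt_le_sqrt ?_
  calc t ^ 2 * (min u a * min u b) = (min u a * t) * (min u b * t) := by ring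
    _ ≤ (min t a * u) * (min t b * u) :=
        mul_le_mul (min_mul_le_min_mul ht htu ha) (min_mul_le_min_mul ht htu hb)
          (mul_nonneg (le_min hu hb) ht) (mul_nonneg (le_min ht ha) hu)
    _ = u ^ 2 * (min t a * min t b) := by ring

end GeometricMeanOfMins

lemma sq_succ_mul_sub_mul_le {y s S : ℝ} (hy : 4 ≤ y) (hs : 0 ≤ s) (hsS : s ≤ S)
    (hS : y * S ≤ (y + 1) * s) :
    ((y + 1) * S - y * s) ^ 2 ≤ 81 / 16 * s ^ 2 := by
  have hnonneg : 0 ≤ (y + 1) * S - y * s := by nlinarith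
  have hle : (y + 1) * S - y * s ≤ 9 / 4 * s := by
    nlinarith [mul_le_mul_of_nonneg_left hS (by linarith : 0 ≤ y + 1),
      mul_nonneg (by linarith : 0 ≤ y - 4) hs]
  calc ((y + 1) * S - y * s) ^ 2 ≤ (9 / 4 * s) ^ 2 := pow_le_pow_left₀ hnonneg hle 2
    _ = 81 / 16 * s ^ 2 := by ring

/-- For `2 ≤ a ≤ b` and integer `y ≥ 4`, with
`h(y,a,b) = ((y+1)√(min{y+1,a}·min{y+1,b}) - y√(min{y,a}·min{y,b}))^2`, we have
`h(y,a,b) ≤ (81/16)·min{y,a}·min{y,b} ≤ (81/16)·y·√(min{y,a}·min{y,b})`. -/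
theorem stmt_9 (a b : ℝ) (ha : 2 ≤ a) (hab : a ≤ b) (y : ℕ) (hy : 4 ≤ y) :
    (((y : ℝ) + 1) * Real.sqrt (min ((y : ℝ) + 1) a * min ((y : ℝ) + 1) b)
        - (y : ℝ) * Real.sqrt (min (y : ℝ) a * min (y : ℝ) b)) ^ 2
      ≤ 81 / 16 * (min (y : ℝ) a * min (y : ℝ) b) ∧
    81 / 16 * (min (y : ℝ) a * min (y : ℝ) b)
      ≤ 81 / 16 * ((y : ℝ) * Real.sqrt (min (y : ℝ) a * min (y : ℝ) b)) := by
  have hy4 : (4 : ℝ) ≤ y := by exact_mod_cast hy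
  have hy0 : (0 : ℝ) ≤ y := y.cast_nonneg
  have ha0 : 0 ≤ a := by linarith
  have hb0 : 0 ≤ b := by linarith
  have hmin : 0 ≤ min (y : ℝ) a * min (y : ℝ) b := mul_nonneg (le_min hy0 ha0) (le_min hy0 hb0)
  have hsucc : (y : ℝ) ≤ y + 1 := by linarith
  constructor
  · calc _ ≤ 81 / 16 * √(min (y : ℝ) a * min (y : ℝ) b) ^ 2 :=
          sq_succ_mul_sub_mul_le hy4 (sqrt_nonneg _)
            (sqrt_min_mul_min_mono hy0 hsucc ha0 hb0) (mul_sqrt_min_mul_min_le hy0 hsucc ha0 hb0)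
      _ = _ := by rw [sq_sqrt hmin]
  · refine mul_le_mul_of_nonneg_left ?_ (by norm_num)
    calc _ = √(min (y : ℝ) a * min (y : ℝ) b) * √(min (y : ℝ) a * min (y : ℝ) b) :=
          (mul_self_sqrt hmin).symm
      _ ≤ _ := by gcongr; exact sqrt_min_mul_min_le hy0 hb0
end
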